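/- arXiv:2401.11870 — 7 statements merged into one kernel-verified Lean document; each statement's English description precedes it below -/
import Mathlib

section
/- Let G be a bipartite graph with parts A_G and B_G and edge set E_G, and consider the election constructed from G as follows: the candidate set is A_G ∪ B_G; there is one voter v_A approving exactly A_G, one voter v_B approving exactly B_G, and for every x ∈ A_G a voter v_x approving exactly {x} ∪ (B_G \ N(x)), where N(x) is the set of neighbors of x in G. Then for every k ≥ 1 and all sets X, Y ⊆ A_G ∪ B_G with |X| = |Y| = k, the following are equivalent: (1) (X,Y) is a k-biclique in G, i.e., one of X, Y is contained in A_G, the other in B_G, and every pair consisting of one element of X and one element of Y is an edge of G; (2) the matching-extension Jaccard distance satisfies jac(X,Y) = k. -/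
open scoped Classical

/-- The set of voters approving candidate `c`. -/
noncomputable def approvers {V C : Type*} [Fintype V] (app : V → C → Prop) (c : C) :
    Finset V :=
  Finset.univ.filter fun v => app v c

/-- The Jaccard distance between two candidates. -/
noncomputable def jac {V C : Type*} [Fintype V] (app : V → C → Prop) (c d : C) : ℝ :=
  1 - ((approvers app c ∩ approvers app d).card : ℝ) /
      ((approvers app c ∪ approvers app d).card : ℝ)

/-- The approval relation of the election constructed from a bipartite graph with
parts `A`, `B` and edge relation `E`: voter `v_A = Sum.inl ()` approves exactly the
candidates in `A_G`, voter `v_B = Sum.inr (Sum.inl ())` approves exactly the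
candidates in `B_G`, and voter `v_x = Sum.inr (Sum.inr x)` (for `x ∈ A_G`)
approves exactly `{x} ∪ (B_G \ N(x))`. -/
def bbApp {A B : Type*} (E : A → B → Prop) : (Unit ⊕ Unit ⊕ A) → (A ⊕ B) → Prop
  | Sum.inl _, Sum.inl _ => True
  | Sum.inl _, Sum.inr _ => False
  | Sum.inr (Sum.inl _), Sum.inl _ => False
  | Sum.inr (Sum.inl _), Sum.inr _ => True
  | Sum.inr (Sum.inr x), Sum.inl a => a = x
  | Sum.inr (Sum.inr x), Sum.inr b => ¬ E x b


/-- The matching extension of a candidate distance `d` to committees `X`, `Y`: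
the minimum over bijections `σ` between the members of `X` and of `Y`
of `∑_{x ∈ X} d x (σ x)`. -/
noncomputable def matchExt {C : Type*} (d : C → C → ℝ) (X Y : Finset C) : ℝ :=
  sInf {s : ℝ | ∃ σ : {x // x ∈ X} ≃ {y // y ∈ Y},
    s = ∑ x ∈ X.attach, d x.1 (σ x).1}

/-- `(X, Y)` is a `k`-biclique: one of `X`, `Y` is contained in the part `A_G`,
the other in `B_G`, and every pair of one element of `X` and one of `Y` is an edge. -/
def IsKBiclique {A B : Type*} (E : A → B → Prop) (X Y : Finset (A ⊕ B)) : Prop :=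
  ((∀ c ∈ X, ∃ a : A, c = Sum.inl a) ∧ (∀ c ∈ Y, ∃ b : B, c = Sum.inr b) ∧
    ∀ a b, Sum.inl a ∈ X → Sum.inr b ∈ Y → E a b) ∨
  ((∀ c ∈ X, ∃ b : B, c = Sum.inr b) ∧ (∀ c ∈ Y, ∃ a : A, c = Sum.inl a) ∧
    ∀ a b, Sum.inl a ∈ Y → Sum.inr b ∈ X → E a b)

set_option linter.unusedSectionVars false

lemma jac_le_one' {V C : Type*} [Fintype V] (app : V → C → Prop) (c d : C) :
    jac app c d ≤ 1 := by
  unfold jac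
  rw [sub_le_self_iff]
  positivity

lemma jac_eq_one_iff' {V C : Type*} [Fintype V] (app : V → C → Prop) (c d : C)
    (h : ∃ v, app v c ∨ app v d) :
    jac app c d = 1 ↔ ∀ v, ¬ (app v c ∧ app v d) := by
  unfold jac
  rw [sub_eq_self, div_eq_zero_iff]
  obtain ⟨v₀, hv₀⟩ := h
  have hv₀' : v₀ ∈ approvers app c ∪ approvers app d := by
    rw [Finset.mem_union]
    rcases hv₀ with h | h
    · exact Or.inl (by simp [approvers, h])
    · exact Or.inr (by simp [approvers, h])
  have hden : ((approvers app c ∪ approvers app d).card : ℝ) ≠ 0 := by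
    have : 0 < (approvers app c ∪ approvers app d).card :=
      Finset.card_pos.2 ⟨v₀, hv₀'⟩
    exact_mod_cast this.ne'
  rw [or_iff_left hden, Nat.cast_eq_zero, Finset.card_eq_zero,
    Finset.eq_empty_iff_forall_notMem]
  constructor
  · intro h v hv
    exact h v (Finset.mem_inter.mpr ⟨by simp [approvers, hv.1], by simp [approvers, hv.2]⟩)
  · intro h v hv
    rw [Finset.mem_inter] at hv
    exact h v ⟨by simpa [approvers] using hv.1, by simpa [approvers] using hv.2⟩

section Aux
variable {A B : Type*} [Fintype A] [Fintype B] (E : A → B → Prop)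

lemma jac_le_one (c d : A ⊕ B) : jac (bbApp E) c d ≤ 1 := jac_le_one' _ c d

lemma jac_eq_one_iff (c d : A ⊕ B) :
    jac (bbApp E) c d = 1 ↔
      ((∃ a b, c = Sum.inl a ∧ d = Sum.inr b ∧ E a b) ∨
       (∃ a b, c = Sum.inr b ∧ d = Sum.inl a ∧ E a b)) := by
  have hne : ∃ v, bbApp E v c ∨ bbApp E v d := by
    rcases c with a | b
    · exact ⟨Sum.inl (), Or.inl trivial⟩
    · exact ⟨Sum.inr (Sum.inl ()), Or.inl trivial⟩
  rw [jac_eq_one_iff' _ c d hne]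
  rcases c with a | b <;> rcases d with a' | b'
  · constructor
    · intro h; exact absurd ⟨trivial, trivial⟩ (h (Sum.inl ()))
    · rintro (⟨_, _, _, h, _⟩ | ⟨_, _, h, _, _⟩) <;> simp at h
  · constructor
    · intro h
      by_contra hE
      rw [not_or] at hE
      have hE' : ¬ E a b' := fun hab => hE.1 ⟨a, b', rfl, rfl, hab⟩
      exact (h (Sum.inr (Sum.inr a))) ⟨rfl, hE'⟩
    · rintro (⟨a'', b'', h1, h2, hE⟩ | ⟨_, _, h, _, _⟩)
      · rw [Sum.inl.injEq] at h1
        rw [Sum.inr.injEq] at h2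
        subst h1; subst h2
        rintro (u | u | x) ⟨h1, h2⟩
        · exact h2
        · exact h1
        · exact h2 (h1 ▸ hE)
      · simp at h
  · constructor
    · intro h
      by_contra hE
      rw [not_or] at hE
      have hE' : ¬ E a' b := fun hab => hE.2 ⟨a', b, rfl, rfl, hab⟩
      exact (h (Sum.inr (Sum.inr a'))) ⟨hE', rfl⟩
    · rintro (⟨_, _, h, _, _⟩ | ⟨a'', b'', h1, h2, hE⟩)
      · simp at h
      · rw [Sum.inr.injEq] at h1
        rw [Sum.inl.injEq] at h2
        subst h1; subst h2
        rintro (u | u | x) ⟨h1, h2⟩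
        · exact h1
        · exact h2
        · exact h1 (h2 ▸ hE)
  · constructor
    · intro h
      exact absurd ⟨trivial, trivial⟩ (h (Sum.inr (Sum.inl ())))
    · rintro (⟨_, _, h, _, _⟩ | ⟨_, _, _, h, _⟩) <;> simp at h

end Aux

/-- In the election constructed from a bipartite graph `G`, for every `k ≥ 1` and all
sets `X`, `Y` of candidates with `|X| = |Y| = k`: `(X, Y)` is a `k`-biclique in `G`
iff the matching-extension Jaccard distance satisfies `jac(X, Y) = k`. -/
theorem biclique_iff_jac_eq_k {A B : Type*} [Fintype A] [Fintype B]
    (E : A → B → Prop) (k : ℕ) (hk : 1 ≤ k)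
    (X Y : Finset (A ⊕ B)) (hX : X.card = k) (hY : Y.card = k) :
    IsKBiclique E X Y ↔ matchExt (jac (bbApp E)) X Y = (k : ℝ) := by
  classical
  have hcard : Fintype.card {x // x ∈ X} = Fintype.card {y // y ∈ Y} := by
    simp only [Fintype.card_coe, hX, hY]
  obtain ⟨e⟩ := Fintype.card_eq.mp hcard
  set f : ({x // x ∈ X} ≃ {y // y ∈ Y}) → ℝ :=
    fun σ => ∑ x ∈ X.attach, jac (bbApp E) x.1 (σ x).1 with hf
  have hSdef : {s : ℝ | ∃ σ : {x // x ∈ X} ≃ {y // y ∈ Y},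
      s = ∑ x ∈ X.attach, jac (bbApp E) x.1 (σ x).1} = Set.range f := by
    ext s
    simp only [Set.mem_setOf_eq, Set.mem_range, hf, eq_comm]
  have hME : matchExt (jac (bbApp E)) X Y = sInf (Set.range f) := by
    rw [matchExt, hSdef]
  have hfin : (Set.range f).Finite := Set.finite_range f
  have hne : (Set.range f).Nonempty := ⟨f e, e, rfl⟩
  have hub : ∀ σ, f σ ≤ (k : ℝ) := by
    intro σ
    calc f σ ≤ ∑ _x ∈ X.attach, (1:ℝ) :=
          Finset.sum_le_sum fun x _ => jac_le_one E _ _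
      _ = (k : ℝ) := by simp [hX]
  have key : matchExt (jac (bbApp E)) X Y = (k : ℝ) ↔
      ∀ x ∈ X, ∀ y ∈ Y, jac (bbApp E) x y = 1 := by
    constructor
    · intro h x hx y hy
      set σ : {x // x ∈ X} ≃ {y // y ∈ Y} :=
        (Equiv.swap ⟨x, hx⟩ (e.symm ⟨y, hy⟩)).trans e with hσ
      have hσx : σ ⟨x, hx⟩ = ⟨y, hy⟩ := by
        simp [hσ, Equiv.swap_apply_left]
      have hle : (k : ℝ) ≤ f σ := by
        rw [← h, hME]
        exact csInf_le hfin.bddBelow ⟨σ, rfl⟩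
      have heq : f σ = (k : ℝ) := le_antisymm (hub σ) hle
      have hall : ∀ z ∈ X.attach, jac (bbApp E) z.1 (σ z).1 = 1 := by
        by_contra hc
        push_neg at hc
        obtain ⟨z, hz, hnez⟩ := hc
        have hlt : f σ < ∑ _x ∈ X.attach, (1:ℝ) :=
          Finset.sum_lt_sum (fun i _ => jac_le_one E _ _)
            ⟨z, hz, lt_of_le_of_ne (jac_le_one E _ _) hnez⟩
        rw [heq] at hlt
        simp [hX] at hlt
      have hx1 := hall ⟨x, hx⟩ (Finset.mem_attach _ _)
      rwa [hσx] at hx1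
    · intro h
      have hrange : Set.range f = {(k : ℝ)} := by
        apply Set.eq_singleton_iff_nonempty_unique_mem.mpr
        refine ⟨hne, ?_⟩
        rintro s ⟨σ, rfl⟩
        calc f σ = ∑ _x ∈ X.attach, (1:ℝ) :=
              Finset.sum_congr rfl fun z _ => h z.1 z.2 (σ z).1 (σ z).2
          _ = (k : ℝ) := by simp [hX]
      rw [hME, hrange, csInf_singleton]
  rw [key]
  constructor
  · rintro (⟨hXA, hYB, hEdge⟩ | ⟨hXB, hYA, hEdge⟩) x hx y hy
    · obtain ⟨a, rfl⟩ := hXA x hx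
      obtain ⟨b, rfl⟩ := hYB y hy
      exact (jac_eq_one_iff E _ _).mpr (Or.inl ⟨a, b, rfl, rfl, hEdge a b hx hy⟩)
    · obtain ⟨b, rfl⟩ := hXB x hx
      obtain ⟨a, rfl⟩ := hYA y hy
      exact (jac_eq_one_iff E _ _).mpr (Or.inr ⟨a, b, rfl, rfl, hEdge a b hy hx⟩)
  · intro h
    have hXne : X.Nonempty := Finset.card_pos.mp (by omega)
    have hYne : Y.Nonempty := Finset.card_pos.mp (by omega)
    obtain ⟨x₀, hx₀⟩ := hXne
    obtain ⟨y₀, hy₀⟩ := hYne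
    rcases x₀ with a₀ | b₀
    · left
      have hYB : ∀ c ∈ Y, ∃ b, c = Sum.inr b := by
        intro c hc
        rcases (jac_eq_one_iff E _ _).mp (h _ hx₀ _ hc) with
          ⟨a, b, _, h2, _⟩ | ⟨a, b, h1, _, _⟩
        · exact ⟨b, h2⟩
        · simp at h1
      obtain ⟨b₁, rfl⟩ := hYB y₀ hy₀
      have hXA : ∀ c ∈ X, ∃ a, c = Sum.inl a := by
        intro c hc
        rcases (jac_eq_one_iff E _ _).mp (h _ hc _ hy₀) with
          ⟨a, b, h1, _, _⟩ | ⟨a, b, _, h2, _⟩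
        · exact ⟨a, h1⟩
        · simp at h2
      refine ⟨hXA, hYB, ?_⟩
      intro a b ha hb
      rcases (jac_eq_one_iff E _ _).mp (h _ ha _ hb) with
        ⟨a', b', h1, h2, hE⟩ | ⟨a', b', h1, _, _⟩
      · rw [Sum.inl.injEq] at h1
        rw [Sum.inr.injEq] at h2
        subst h1; subst h2
        exact hE
      · simp at h1
    · right
      have hYA : ∀ c ∈ Y, ∃ a, c = Sum.inl a := by
        intro c hc
        rcases (jac_eq_one_iff E _ _).mp (h _ hx₀ _ hc) with
          ⟨a, b, h1, _, _⟩ | ⟨a, b, _, h2, _⟩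
        · simp at h1
        · exact ⟨a, h2⟩
      obtain ⟨a₁, rfl⟩ := hYA y₀ hy₀
      have hXB : ∀ c ∈ X, ∃ b, c = Sum.inr b := by
        intro c hc
        rcases (jac_eq_one_iff E _ _).mp (h _ hc _ hy₀) with
          ⟨a, b, _, h2, _⟩ | ⟨a, b, h1, _, _⟩
        · simp at h2
        · exact ⟨b, h1⟩
      refine ⟨hXB, hYA, ?_⟩
      intro a b ha hb
      rcases (jac_eq_one_iff E _ _).mp (h _ hb _ ha) with
        ⟨a', b', h1, _, _⟩ | ⟨a', b', h1, h2, hE⟩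
      · simp at h1
      · rw [Sum.inr.injEq] at h1
        rw [Sum.inl.injEq] at h2
        subst h1; subst h2
        exact hE
end

section
/- Let G be a bipartite graph with parts A_G and B_G and edge set E_G, and consider the election constructed from G as follows: the candidate set is A_G ∪ B_G; there is one voter v_A approving exactly A_G, one voter v_B approving exactly B_G, and for every x ∈ A_G a voter v_x approving exactly {x} ∪ (B_G \ N(x)), where N(x) is the set of neighbors of x in G. Then for every x ∈ A_G and y ∈ B_G: A(x) ∩ A(y) = ∅ if and only if (x,y) ∈ E_G. In particular, if (x,y) is an edge of G then no voter approves both x and y, and hence jac(x,y) = 1. -/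
open scoped Classical

section Approvers

variable {V C : Type*} [Fintype V] (app : V → C → Prop)

theorem disjoint_approvers_iff {c d : C} :
    Disjoint (approvers app c) (approvers app d) ↔ ¬ ∃ v, app v c ∧ app v d := by
  simp [approvers, Finset.disjoint_filter]

/-- `Disjoint` rather than `∩ = ∅`, so that no choice of `DecidableEq V` is involved. -/
theorem jac_eq_one_of_disjoint {c d : C} (h : Disjoint (approvers app c) (approvers app d)) :
    jac app c d = 1 := by
  rw [jac, Finset.disjoint_iff_inter_eq_empty.mp h]
  simp

end Approvers

/-- The only voter who could approve both `x` and `y` is `v_x`, and `v_x` approves `y` iff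
`y ∉ N(x)`. -/
theorem exists_bbApp_inl_and_inr_iff {A B : Type*} (E : A → B → Prop) (x : A) (y : B) :
    (∃ v, bbApp E v (Sum.inl x) ∧ bbApp E v (Sum.inr y)) ↔ ¬ E x y := by
  constructor
  · rintro ⟨(_ | _ | x'), hx, hy⟩
    · exact hy.elim
    · exact hx.elim
    · exact (show x = x' from hx) ▸ hy
  · exact fun h => ⟨Sum.inr (Sum.inr x), rfl, h⟩

theorem approvers_inter_empty_iff_edge_general {A B : Type*} [Fintype A]
    (E : A → B → Prop) (x : A) (y : B) :
    (approvers (bbApp E) (Sum.inl x) ∩ approvers (bbApp E) (Sum.inr y) = ∅ ↔ E x y) ∧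
    (E x y → jac (bbApp E) (Sum.inl x) (Sum.inr y) = 1) := by
  have hdisj : Disjoint (approvers (bbApp E) (Sum.inl x)) (approvers (bbApp E) (Sum.inr y)) ↔
      E x y := by
    rw [disjoint_approvers_iff, exists_bbApp_inl_and_inr_iff, not_not]
  exact ⟨Finset.disjoint_iff_inter_eq_empty.symm.trans hdisj,
    fun h => jac_eq_one_of_disjoint _ (hdisj.mpr h)⟩

/-- In the election constructed from a bipartite graph, for `x ∈ A_G` and `y ∈ B_G`:
no voter approves both `x` and `y` iff `(x, y)` is an edge; in particular, if `(x, y)`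
is an edge then `jac(x, y) = 1`. -/
theorem approvers_inter_empty_iff_edge {A B : Type*} [Fintype A] [Fintype B]
    (E : A → B → Prop) (x : A) (y : B) :
    (approvers (bbApp E) (Sum.inl x) ∩ approvers (bbApp E) (Sum.inr y) = ∅ ↔ E x y) ∧
    (E x y → jac (bbApp E) (Sum.inl x) (Sum.inr y) = 1) :=
  approvers_inter_empty_iff_edge_general E x y
end

section
/- Let G be a bipartite graph with parts A_G and B_G and edge set E_G, and consider the Hamming-construction election from G: the candidate set is A_G ∪ B_G; there are |A_G| voters each approving exactly A_G; |A_G| voters each approving exactly B_G; for every x ∈ A_G a voter v_x approving exactly {x} ∪ (B_G \ N(x)), where N(x) is the set of neighbors of x in G; and |A_G| degree-correcting voters, each approving no candidate from A_G, such that every y ∈ B_G is approved by exactly deg(y) of the degree-correcting voters (this is possible since deg(y) ≤ |A_G|). Then for any two distinct candidates x_1, x_2 ∈ A_G, ham(x_1,x_2) = 2, and for any two distinct candidates y_1, y_2 ∈ B_G, ham(y_1,y_2) ≤ 2·|A_G|. -/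
open scoped Classical

/-- The Hamming distance between two candidates: the number of voters approving
exactly one of them. -/
noncomputable def ham {V C : Type*} [Fintype V] (app : V → C → Prop) (c d : C) : ℕ :=
  (approvers app c \ approvers app d).card + (approvers app d \ approvers app c).card

/-- The approval relation of the Hamming-construction election from a bipartite graph
with parts `A`, `B` and edge relation `E`. The voters are indexed by `A ⊕ A ⊕ A ⊕ A`:
`|A|` voters each approving exactly `A_G`; `|A|` voters each approving exactly `B_G`;
for every `x ∈ A_G` a voter `v_x` approving exactly `{x} ∪ (B_G \ N(x))`; and `|A|`
degree-correcting voters, approving no candidate from `A_G`, whose approvals of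
candidates in `B_G` are given by a relation `dc`. -/
def hamApp {A B : Type*} (E dc : A → B → Prop) :
    (A ⊕ A ⊕ A ⊕ A) → (A ⊕ B) → Prop
  | Sum.inl _, Sum.inl _ => True
  | Sum.inl _, Sum.inr _ => False
  | Sum.inr (Sum.inl _), Sum.inl _ => False
  | Sum.inr (Sum.inl _), Sum.inr _ => True
  | Sum.inr (Sum.inr (Sum.inl x)), Sum.inl a => a = x
  | Sum.inr (Sum.inr (Sum.inl x)), Sum.inr b => ¬ E x b
  | Sum.inr (Sum.inr (Sum.inr _)), Sum.inl _ => False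
  | Sum.inr (Sum.inr (Sum.inr a)), Sum.inr b => dc a b


/-- Instance-agnostic computation of `ham` from explicit difference sets. -/
lemma ham_eq_aux {V C : Type*} [Fintype V] (app : V → C → Prop) (c d : C) (s t : Finset V)
    (hs : ∀ v, v ∈ s ↔ app v c ∧ ¬ app v d) (ht : ∀ v, v ∈ t ↔ app v d ∧ ¬ app v c) :
    ham app c d = s.card + t.card := by
  rw [ham]
  have h1 : approvers app c \ approvers app d = s := by
    ext v
    simp [approvers, hs v]
  have h2 : approvers app d \ approvers app c = t := by
    ext v
    simp [approvers, ht v]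
  rw [h1, h2]

/-- In the Hamming-construction election (where every `y ∈ B_G` is approved by exactly
`deg(y)` degree-correcting voters): any two distinct candidates of `A_G` are at Hamming
distance `2`, and any two distinct candidates of `B_G` are at Hamming distance at most
`2|A_G|`. -/
theorem ham_same_side {A B : Type*} [Fintype A] [Fintype B] (E dc : A → B → Prop)
    (hdc : ∀ b : B, (Finset.univ.filter fun a : A => dc a b).card =
      (Finset.univ.filter fun a : A => E a b).card) :
    (∀ x₁ x₂ : A, x₁ ≠ x₂ →
      ham (hamApp E dc) (Sum.inl x₁) (Sum.inl x₂) = 2) ∧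
    (∀ y₁ y₂ : B, y₁ ≠ y₂ →
      ham (hamApp E dc) (Sum.inr y₁) (Sum.inr y₂) ≤ 2 * Fintype.card A) := by
  constructor
  · intro x₁ x₂ hne
    have key : ∀ u w : A, u ≠ w → ∀ v : A ⊕ A ⊕ A ⊕ A,
        v ∈ ({(Sum.inr (Sum.inr (Sum.inl u)) : A ⊕ A ⊕ A ⊕ A)} : Finset _) ↔
          hamApp E dc v (Sum.inl u) ∧ ¬ hamApp E dc v (Sum.inl w) := by
      intro u w huw v
      rcases v with a | a | a | a <;> simp [hamApp]
      constructor
      · rintro rfl; exact ⟨rfl, fun h => huw h.symm⟩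
      · rintro ⟨h1, h2⟩; exact h1.symm
    rw [ham_eq_aux (hamApp E dc) (Sum.inl x₁) (Sum.inl x₂) _ _
      (key x₁ x₂ hne) (key x₂ x₁ hne.symm)]
    simp
  · intro y₁ y₂ _
    set D₁ : Finset (A ⊕ A ⊕ A ⊕ A) :=
      Finset.univ.filter fun v => hamApp E dc v (Sum.inr y₁) ∧ ¬ hamApp E dc v (Sum.inr y₂)
      with hD₁
    set D₂ : Finset (A ⊕ A ⊕ A ⊕ A) :=
      Finset.univ.filter fun v => hamApp E dc v (Sum.inr y₂) ∧ ¬ hamApp E dc v (Sum.inr y₁)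
      with hD₂
    set T₃ := Finset.univ.image (fun a : A => (Sum.inr (Sum.inr (Sum.inl a)) : A ⊕ A ⊕ A ⊕ A))
      with hT₃
    set T₄ := Finset.univ.image (fun a : A => (Sum.inr (Sum.inr (Sum.inr a)) : A ⊕ A ⊕ A ⊕ A))
      with hT₄
    have hmem₁ : ∀ v, v ∈ D₁ ↔ hamApp E dc v (Sum.inr y₁) ∧ ¬ hamApp E dc v (Sum.inr y₂) := by
      intro v; rw [hD₁]; simp
    have hmem₂ : ∀ v, v ∈ D₂ ↔ hamApp E dc v (Sum.inr y₂) ∧ ¬ hamApp E dc v (Sum.inr y₁) := by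
      intro v; rw [hD₂]; simp
    have hdisj : Disjoint D₁ D₂ := by
      rw [Finset.disjoint_left]
      intro v hv₁ hv₂
      exact ((hmem₂ v).1 hv₂).2 ((hmem₁ v).1 hv₁).1
    have hsub : D₁ ∪ D₂ ⊆ T₃ ∪ T₄ := by
      intro v hv
      rcases Finset.mem_union.1 hv with hv | hv
      · have := (hmem₁ v).1 hv
        rcases v with a | a | a | a <;>
          simp only [hamApp, not_true, and_false, false_and] at this <;>
          simp [hT₃, hT₄]
      · have := (hmem₂ v).1 hv
        rcases v with a | a | a | a <;>
          simp only [hamApp, not_true, and_false, false_and] at this <;>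
          simp [hT₃, hT₄]
    calc ham (hamApp E dc) (Sum.inr y₁) (Sum.inr y₂) = D₁.card + D₂.card :=
          ham_eq_aux _ _ _ _ _ hmem₁ hmem₂
      _ = (D₁ ∪ D₂).card := (Finset.card_union_of_disjoint hdisj).symm
      _ ≤ (T₃ ∪ T₄).card := Finset.card_le_card hsub
      _ ≤ T₃.card + T₄.card := Finset.card_union_le _ _
      _ ≤ Fintype.card A + Fintype.card A :=
          Nat.add_le_add (Finset.card_image_le.trans (le_of_eq Finset.card_univ))
            (Finset.card_image_le.trans (le_of_eq Finset.card_univ))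
      _ = 2 * Fintype.card A := (two_mul _).symm
end

section
/- Let G be a bipartite graph with parts A_G and B_G and edge set E_G, and consider the Hamming-construction election from G: the candidate set is A_G ∪ B_G; there are |A_G| voters each approving exactly A_G; |A_G| voters each approving exactly B_G; for every x ∈ A_G a voter v_x approving exactly {x} ∪ (B_G \ N(x)), where N(x) is the set of neighbors of x in G; and |A_G| degree-correcting voters, each approving no candidate from A_G, such that every y ∈ B_G is approved by exactly deg(y) of the degree-correcting voters (this is possible since deg(y) ≤ |A_G|). Then for every x ∈ A_G and y ∈ B_G: if (x,y) ∈ E_G then ham(x,y) = 3·|A_G| + 1, and if (x,y) ∉ E_G then ham(x,y) = 3·|A_G| − 1. -/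
open scoped Classical

/-!
Split the distance over the four blocks of voters. The voters approving `A_G` and those
approving `B_G` all separate `x` from `y`, giving `2|A_G|`; the degree-correcting voters give
`deg(y)`; and `v_a` separates `x` from `y` exactly when `a = x ↔ (a, y) ∈ E_G`. Counting the
last set against `deg(y)` gives `|A_G| - 1 - deg(y) + 2[(x, y) ∈ E_G]`.
-/

open Finset

lemma ham_eq_sum_ite {V C : Type*} [Fintype V] (app : V → C → Prop) (c d : C) :
    ham app c d = ∑ v, if (app v c ↔ ¬ app v d) then 1 else 0 := by
  simp only [ham, approvers, ← filter_and_not, card_filter, ← sum_add_distrib]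
  refine sum_congr rfl fun v _ => ?_
  split_ifs <;> tauto

lemma ham_sum_voters {V W C : Type*} [Fintype V] [Fintype W] (app : V ⊕ W → C → Prop)
    (c d : C) :
    ham app c d = ham (fun v => app (.inl v)) c d + ham (fun w => app (.inr w)) c d := by
  simp only [ham_eq_sum_ite, Fintype.sum_sum_type]

lemma card_filter_eq_iff_add_card_filter {α : Type*} [Fintype α] (p : α → Prop) (x : α) :
    #{a | x = a ↔ p a} + #{a | p a} + 1 = Fintype.card α + 2 * if p x then 1 else 0 := by
  have pointwise : ∀ a, (if (x = a ↔ p a) then 1 else 0) + (if p a then 1 else 0) +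
      (if x = a then 1 else 0) = 1 + 2 * if x = a ∧ p a then 1 else 0 := by
    intro a; split_ifs <;> tauto
  calc #{a | x = a ↔ p a} + #{a | p a} + 1
      = ∑ a, ((if (x = a ↔ p a) then 1 else 0) + (if p a then 1 else 0) +
          (if x = a then 1 else 0)) := by
        simp only [sum_add_distrib, card_filter, sum_ite_eq, mem_univ, if_true]
    _ = Fintype.card α + 2 * if p x then 1 else 0 := by
        simp only [pointwise, sum_add_distrib, ← mul_sum, ite_and, sum_ite_eq, mem_univ, if_true,
          sum_const, card_univ, smul_eq_mul, mul_one]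

lemma ham_hamApp_inl_inr {A B : Type*} [Fintype A] (E dc : A → B → Prop) (x : A) (y : B) :
    ham (hamApp E dc) (.inl x) (.inr y) =
      2 * Fintype.card A + #{a | x = a ↔ E a y} + #{a | dc a y} := by
  simp only [ham_sum_voters]
  simp only [ham_eq_sum_ite, hamApp, not_not, not_true, not_false_eq_true, false_iff,
    if_true, card_filter, sum_const, card_univ, smul_eq_mul, mul_one]
  ring

theorem ham_cross_side_general {A B : Type*} [Fintype A] (E dc : A → B → Prop)
    (hdc : ∀ b : B, (Finset.univ.filter fun a : A => dc a b).card =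
      (Finset.univ.filter fun a : A => E a b).card)
    (x : A) (y : B) :
    (E x y → ham (hamApp E dc) (Sum.inl x) (Sum.inr y) = 3 * Fintype.card A + 1) ∧
    (¬ E x y → ham (hamApp E dc) (Sum.inl x) (Sum.inr y) = 3 * Fintype.card A - 1) := by
  have hcount := card_filter_eq_iff_add_card_filter (E · y) x
  rw [ham_hamApp_inl_inr, hdc]
  constructor <;> intro hxy <;> simp only [hxy, if_true, if_false] at hcount <;> omega

/-- In the Hamming-construction election (where every `y ∈ B_G` is approved by exactly
`deg(y)` degree-correcting voters), for `x ∈ A_G` and `y ∈ B_G`: if `(x, y)` is an edge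
then `ham(x, y) = 3|A_G| + 1`, and otherwise `ham(x, y) = 3|A_G| - 1`. -/
theorem ham_cross_side {A B : Type*} [Fintype A] [Fintype B] (E dc : A → B → Prop)
    (hdc : ∀ b : B, (Finset.univ.filter fun a : A => dc a b).card =
      (Finset.univ.filter fun a : A => E a b).card)
    (x : A) (y : B) :
    (E x y → ham (hamApp E dc) (Sum.inl x) (Sum.inr y) = 3 * Fintype.card A + 1) ∧
    (¬ E x y → ham (hamApp E dc) (Sum.inl x) (Sum.inr y) = 3 * Fintype.card A - 1) :=
  ham_cross_side_general E dc hdc x y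
end

section
/- Let G be a bipartite graph with parts A_G and B_G (with |A_G| ≥ 1) and edge set E_G, and consider the Hamming-construction election from G: the candidate set is A_G ∪ B_G; there are |A_G| voters each approving exactly A_G; |A_G| voters each approving exactly B_G; for every x ∈ A_G a voter v_x approving exactly {x} ∪ (B_G \ N(x)), where N(x) is the set of neighbors of x in G; and |A_G| degree-correcting voters, each approving no candidate from A_G, such that every y ∈ B_G is approved by exactly deg(y) of the degree-correcting voters. Then for every k ≥ 1 and all sets X, Y ⊆ A_G ∪ B_G with |X| = |Y| = k, the following are equivalent: (1) (X,Y) is a k-biclique in G, i.e., one of X, Y is contained in A_G, the other in B_G, and every pair consisting of one element of X and one element of Y is an edge of G; (2) the matching-extension Hamming distance satisfies ham(X,Y) = k·(3·|A_G| + 1). -/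
open scoped Classical

/-! ### Auxiliary counting machinery -/

/-- Number of elements of a fintype satisfying a predicate. -/
noncomputable def cnt {γ : Type*} [Fintype γ] (p : γ → Prop) : ℕ :=
  (Finset.univ.filter p).card

lemma cnt_eq_filter {γ : Type*} [Fintype γ] (p : γ → Prop) :
    cnt p = (Finset.univ.filter fun x => p x).card := rfl

lemma cnt_congr {γ : Type*} [Fintype γ] {p q : γ → Prop} (h : ∀ x, p x ↔ q x) :
    cnt p = cnt q := by
  unfold cnt
  refine congrArg Finset.card ?_
  ext x
  simp [h x]

lemma cnt_sum {α β : Type*} [Fintype α] [Fintype β] (p : α ⊕ β → Prop) :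
    cnt p = cnt (fun a => p (Sum.inl a)) + cnt (fun b => p (Sum.inr b)) := by
  unfold cnt
  rw [← Fintype.card_subtype, ← Fintype.card_subtype, ← Fintype.card_subtype,
    ← Fintype.card_sum]
  exact Fintype.card_congr Equiv.subtypeSum

lemma cnt_true {γ : Type*} [Fintype γ] : cnt (fun _ : γ => True) = Fintype.card γ := by
  simp [cnt]

lemma cnt_false {γ : Type*} [Fintype γ] : cnt (fun _ : γ => False) = 0 := by
  simp [cnt]

lemma cnt_mono {γ : Type*} [Fintype γ] {p q : γ → Prop} (h : ∀ x, p x → q x) :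
    cnt p ≤ cnt q := by
  unfold cnt
  refine Finset.card_le_card ?_
  intro x hx
  simp only [Finset.mem_filter, Finset.mem_univ, true_and] at hx ⊢
  exact h x hx

lemma cnt_add_not {γ : Type*} [Fintype γ] (p : γ → Prop) :
    cnt p + cnt (fun x => ¬ p x) = Fintype.card γ := by
  unfold cnt
  rw [Finset.card_filter_add_card_filter_not, Finset.card_univ]

lemma cnt_add_disjoint {γ : Type*} [Fintype γ] {p q : γ → Prop}
    (h : ∀ x, ¬ (p x ∧ q x)) :
    cnt p + cnt q = cnt (fun x => p x ∨ q x) := by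
  unfold cnt
  refine Eq.trans (Finset.card_union_of_disjoint ?_).symm (congrArg Finset.card ?_)
  · rw [Finset.disjoint_left]
    intro x hx hx'
    simp only [Finset.mem_filter, Finset.mem_univ, true_and] at hx hx'
    exact h x ⟨hx, hx'⟩
  · ext x
    simp

lemma cnt_split {γ : Type*} [Fintype γ] (q r : γ → Prop) :
    cnt q = cnt (fun x => q x ∧ r x) + cnt (fun x => q x ∧ ¬ r x) := by
  exact (cnt_congr (fun x => by tauto)).trans (cnt_add_disjoint (fun x => by tauto)).symm

lemma cnt_eq_and {γ : Type*} [Fintype γ] (a : γ) (r : γ → Prop) :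
    cnt (fun x => x = a ∧ r x) = if r a then 1 else 0 := by
  unfold cnt
  by_cases h : r a
  · rw [if_pos h]
    refine Eq.trans (congrArg Finset.card ?_) (Finset.card_singleton a)
    ext x
    simp only [Finset.mem_filter, Finset.mem_univ, true_and, Finset.mem_singleton]
    exact ⟨fun hx => hx.1, fun hx => ⟨hx, hx ▸ h⟩⟩
  · rw [if_neg h]
    refine Eq.trans (congrArg Finset.card ?_) Finset.card_empty
    ext x
    simp only [Finset.mem_filter, Finset.mem_univ, true_and, Finset.notMem_empty,
      iff_false, not_and]
    rintro rfl
    exact h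

lemma ham_cnt {V C : Type*} [Fintype V] (app : V → C → Prop) (c d : C) :
    ham app c d =
      cnt (fun v => app v c ∧ ¬ app v d) + cnt (fun v => app v d ∧ ¬ app v c) := by
  unfold ham cnt
  congr 1 <;>
  · refine congrArg Finset.card ?_
    ext v
    simp [approvers]

lemma ham_comm {V C : Type*} [Fintype V] (app : V → C → Prop) (c d : C) :
    ham app c d = ham app d c := Nat.add_comm _ _

section HamValues

variable {A B : Type*} [Fintype A] [Fintype B] {E dc : A → B → Prop}

/-- Hamming distance between a candidate of `A_G` and one of `B_G`. -/
lemma ham_inl_inr (hdc : ∀ b : B, cnt (fun a : A => dc a b) = cnt (fun a : A => E a b))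
    (a : A) (b : B) :
    ham (hamApp E dc) (Sum.inl a) (Sum.inr b) + (if E a b then 0 else 2)
      = 3 * Fintype.card A + 1 := by
  rw [ham_cnt]
  rw [cnt_sum, cnt_sum, cnt_sum, cnt_sum, cnt_sum, cnt_sum]
  simp only [hamApp]
  have h1 : cnt (fun v : A => True ∧ ¬ False) = Fintype.card A :=
    (cnt_congr (by simp)).trans cnt_true
  have h2 : cnt (fun v : A => False ∧ ¬ True) = 0 :=
    (cnt_congr (by simp)).trans cnt_false
  have h2' : cnt (fun v : A => False ∧ ¬ (a = v)) = 0 :=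
    (cnt_congr (fun v => by simp)).trans cnt_false
  have h2'' : cnt (fun v : A => False ∧ ¬ dc v b) = 0 :=
    (cnt_congr (fun v => by simp)).trans cnt_false
  have h2''' : cnt (fun v : A => False ∧ ¬ ¬ E v b) = 0 :=
    (cnt_congr (fun v => by simp)).trans cnt_false
  have h3 := (cnt_congr (p := fun v : A => a = v ∧ ¬ ¬ E v b)
      (q := fun v : A => v = a ∧ E v b) (fun v => by
    constructor
    · rintro ⟨rfl, h⟩; exact ⟨rfl, not_not.mp h⟩
    · rintro ⟨rfl, h⟩; exact ⟨rfl, not_not.mpr h⟩)).trans (cnt_eq_and a (fun v => E v b))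
  have hs := cnt_split (fun v : A => ¬ E v b) (fun v => v = a)
  have he := (cnt_congr (p := fun v : A => ¬ E v b ∧ v = a)
      (q := fun v : A => v = a ∧ ¬ E v b) (fun v => by
    constructor
    · rintro ⟨h, rfl⟩; exact ⟨rfl, h⟩
    · rintro ⟨rfl, h⟩; exact ⟨h, rfl⟩)).trans (cnt_eq_and a (fun v => ¬ E v b))
  have hc : cnt (fun v : A => ¬ E v b ∧ ¬ v = a) = cnt (fun v : A => ¬ E v b ∧ ¬ (a = v)) :=
    cnt_congr (fun v => by constructor <;> (rintro ⟨h, h'⟩; exact ⟨h, fun hh => h' hh.symm⟩))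
  have h5 : cnt (fun v : A => dc v b ∧ ¬ False) = cnt (fun v : A => E v b) :=
    (cnt_congr (by simp)).trans (hdc b)
  have h6 : cnt (fun v : A => E v b) + cnt (fun v : A => ¬ E v b) = Fintype.card A :=
    cnt_add_not _
  by_cases hE : E a b
  · rw [if_pos hE] at h3 ⊢
    rw [if_neg (not_not_intro hE)] at he
    omega
  · rw [if_neg hE] at h3
    rw [if_neg hE]
    rw [if_pos hE] at he
    omega

/-- Hamming distance between two candidates of `A_G` is at most `2`. -/
lemma ham_inl_inl (a a' : A) :
    ham (hamApp E dc) (Sum.inl a) (Sum.inl a' : A ⊕ B) ≤ 2 := by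
  rw [ham_cnt]
  rw [cnt_sum, cnt_sum, cnt_sum, cnt_sum, cnt_sum, cnt_sum]
  simp only [hamApp]
  have gen : ∀ (x y : A), cnt (fun v : A => x = v ∧ ¬ (y = v)) ≤ 1 := by
    intro x y
    have : cnt (fun v : A => x = v ∧ ¬ (y = v)) = cnt (fun v : A => v = x ∧ ¬ (y = v)) :=
      cnt_congr (fun v => by constructor <;> (rintro ⟨rfl, h⟩; exact ⟨rfl, h⟩))
    rw [this, cnt_eq_and]
    split <;> omega
  have z1 : cnt (fun v : A => True ∧ ¬ True) = 0 := (cnt_congr (by simp)).trans cnt_false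
  have z2 : cnt (fun v : A => False ∧ ¬ False) = 0 :=
    (cnt_congr (by simp)).trans cnt_false
  have := gen a a'
  have := gen a' a
  rw [z1, z2]
  omega

/-- Hamming distance between two candidates of `B_G` is at most `2 |A|`. -/
lemma ham_inr_inr (b b' : B) :
    ham (hamApp E dc) (Sum.inr b : A ⊕ B) (Sum.inr b') ≤ 2 * Fintype.card A := by
  rw [ham_cnt]
  rw [cnt_sum, cnt_sum, cnt_sum, cnt_sum, cnt_sum, cnt_sum]
  simp only [hamApp]
  have z1 : cnt (fun v : A => True ∧ ¬ True) = 0 := (cnt_congr (by simp)).trans cnt_false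
  have z2 : cnt (fun v : A => False ∧ ¬ False) = 0 :=
    (cnt_congr (by simp)).trans cnt_false
  have s3 : cnt (fun v : A => ¬ E v b ∧ ¬ ¬ E v b') ≤ cnt (fun v : A => ¬ E v b) :=
    cnt_mono (fun v h => h.1)
  have s3' : cnt (fun v : A => ¬ E v b' ∧ ¬ ¬ E v b) ≤ cnt (fun v : A => E v b) :=
    cnt_mono (fun v h => not_not.mp h.2)
  have s4 : cnt (fun v : A => dc v b ∧ ¬ dc v b') ≤ cnt (fun v : A => dc v b) :=
    cnt_mono (fun v h => h.1)
  have s4' : cnt (fun v : A => dc v b' ∧ ¬ dc v b) ≤ cnt (fun v : A => ¬ dc v b) :=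
    cnt_mono (fun v h => h.2)
  have h6 : cnt (fun v : A => E v b) + cnt (fun v : A => ¬ E v b) = Fintype.card A :=
    cnt_add_not _
  have h7 : cnt (fun v : A => dc v b) + cnt (fun v : A => ¬ dc v b) = Fintype.card A :=
    cnt_add_not _
  rw [z1, z2]
  omega

/-- Characterization of the pairs of candidates at maximal Hamming distance. -/
lemma ham_eq_max_iff (hA : 1 ≤ Fintype.card A)
    (hdc : ∀ b : B, cnt (fun a : A => dc a b) = cnt (fun a : A => E a b))
    (c d : A ⊕ B) :
    ham (hamApp E dc) c d = 3 * Fintype.card A + 1 ↔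
      ((∃ a b, c = Sum.inl a ∧ d = Sum.inr b ∧ E a b) ∨
       (∃ a b, c = Sum.inr b ∧ d = Sum.inl a ∧ E a b)) := by
  rcases c with a | b <;> rcases d with a' | b'
  · have := ham_inl_inl (E := E) (dc := dc) a a'
    constructor
    · intro h; omega
    · rintro (⟨_, _, _, h, _⟩ | ⟨_, _, h, _, _⟩) <;> simp at h
  · have := ham_inl_inr hdc a b'
    constructor
    · intro h
      left
      refine ⟨a, b', rfl, rfl, ?_⟩
      by_contra hE
      simp only [hE, if_neg, if_false] at this
      omega
    · rintro (⟨a₀, b₀, h1, h2, hE⟩ | ⟨_, _, h, _, _⟩)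
      · obtain rfl : a₀ = a := by injection h1.symm
        obtain rfl : b₀ = b' := by injection h2.symm
        simp only [hE, if_pos] at this
        omega
      · simp at h
  · have h1 := ham_inl_inr hdc a' b
    have h2 : ham (hamApp E dc) (Sum.inr b : A ⊕ B) (Sum.inl a') =
        ham (hamApp E dc) (Sum.inl a') (Sum.inr b) := ham_comm _ _ _
    constructor
    · intro h
      right
      refine ⟨a', b, rfl, rfl, ?_⟩
      by_contra hE
      simp only [hE, if_neg, if_false] at h1
      omega
    · rintro (⟨_, _, h, _, _⟩ | ⟨a₀, b₀, hb, ha, hE⟩)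
      · simp at h
      · obtain rfl : b₀ = b := by injection hb.symm
        obtain rfl : a₀ = a' := by injection ha.symm
        simp only [hE, if_pos] at h1
        omega
  · have := ham_inr_inr (E := E) (dc := dc) b b'
    constructor
    · intro h; omega
    · rintro (⟨_, _, h, _, _⟩ | ⟨_, _, _, h, _⟩) <;> simp at h

/-- Every pair of candidates is at Hamming distance at most `3 |A| + 1`. -/
lemma ham_le_max (hA : 1 ≤ Fintype.card A)
    (hdc : ∀ b : B, cnt (fun a : A => dc a b) = cnt (fun a : A => E a b))
    (c d : A ⊕ B) :
    ham (hamApp E dc) c d ≤ 3 * Fintype.card A + 1 := by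
  rcases c with a | b <;> rcases d with a' | b'
  · have := ham_inl_inl (E := E) (dc := dc) a a'; omega
  · have := ham_inl_inr hdc a b'; split at this <;> omega
  · have h1 := ham_inl_inr hdc a' b
    have h2 : ham (hamApp E dc) (Sum.inr b : A ⊕ B) (Sum.inl a') =
        ham (hamApp E dc) (Sum.inl a') (Sum.inr b) := ham_comm _ _ _
    split at h1 <;> omega
  · have := ham_inr_inr (E := E) (dc := dc) b b'; omega

end HamValues

/-- In the Hamming-construction election from a bipartite graph `G` with `|A_G| ≥ 1`
(where every `y ∈ B_G` is approved by exactly `deg(y)` degree-correcting voters),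
for every `k ≥ 1` and all sets `X`, `Y` of candidates with `|X| = |Y| = k`:
`(X, Y)` is a `k`-biclique in `G` iff the matching-extension Hamming distance
satisfies `ham(X, Y) = k·(3|A_G| + 1)`. -/
theorem biclique_iff_ham_eq {A B : Type*} [Fintype A] [Fintype B]
    (E dc : A → B → Prop)
    (hA : 1 ≤ Fintype.card A)
    (hdc : ∀ b : B, (Finset.univ.filter fun a : A => dc a b).card =
      (Finset.univ.filter fun a : A => E a b).card)
    (k : ℕ) (hk : 1 ≤ k)
    (X Y : Finset (A ⊕ B)) (hX : X.card = k) (hY : Y.card = k) :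
    IsKBiclique E X Y ↔
      matchExt (fun c d => (ham (hamApp E dc) c d : ℝ)) X Y
        = ((k * (3 * Fintype.card A + 1) : ℕ) : ℝ) := by
  have hdc' : ∀ b : B, cnt (fun a : A => dc a b) = cnt (fun a : A => E a b) := by
    intro b
    exact (cnt_eq_filter _).trans ((hdc b).trans (cnt_eq_filter _).symm)
  set n := Fintype.card A with hn
  set app := hamApp E dc with happ
  set M : ℝ := ((k * (3 * n + 1) : ℕ) : ℝ) with hM
  set S : Set ℝ := {s : ℝ | ∃ σ : {x // x ∈ X} ≃ {y // y ∈ Y},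
    s = ∑ x ∈ X.attach, ((ham app x.1 (σ x).1 : ℕ) : ℝ)} with hS
  have hgoal : matchExt (fun c d => (ham app c d : ℝ)) X Y = sInf S := rfl
  rw [hgoal]
  -- a base bijection
  have hcard : Fintype.card {x // x ∈ X} = Fintype.card {y // y ∈ Y} := by
    simp [Fintype.card_coe, hX, hY]
  obtain σ0 : {x // x ∈ X} ≃ {y // y ∈ Y} := Fintype.equivOfCardEq hcard
  have hSne : S.Nonempty := ⟨_, ⟨σ0, rfl⟩⟩
  have hbdd : BddBelow S := by
    refine ⟨0, ?_⟩
    rintro s ⟨σ, rfl⟩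
    positivity
  have hconst : ∑ _x ∈ X.attach, (((3 * n + 1 : ℕ) : ℝ)) = M := by
    rw [Finset.sum_const, Finset.card_attach, hX, hM]
    push_cast
    ring
  have hub : ∀ s ∈ S, s ≤ M := by
    rintro s ⟨σ, rfl⟩
    rw [← hconst]
    refine Finset.sum_le_sum ?_
    intro i _
    exact_mod_cast ham_le_max hA hdc' i.1 (σ i).1
  constructor
  · -- biclique → distance attains max
    intro hb
    have hall : ∀ s ∈ S, s = M := by
      rintro s ⟨σ, rfl⟩
      rw [← hconst]
      refine Finset.sum_congr rfl ?_
      intro i _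
      have hxi : i.1 ∈ X := i.2
      have hyi : (σ i).1 ∈ Y := (σ i).2
      have : ham app i.1 (σ i).1 = 3 * n + 1 := by
        rcases hb with ⟨hXA, hYB, hE⟩ | ⟨hXB, hYA, hE⟩
        · obtain ⟨a, ha⟩ := hXA _ hxi
          obtain ⟨b, hbb⟩ := hYB _ hyi
          rw [ham_eq_max_iff hA hdc']
          exact Or.inl ⟨a, b, ha, hbb, hE a b (ha ▸ hxi) (hbb ▸ hyi)⟩
        · obtain ⟨b, hbb⟩ := hXB _ hxi
          obtain ⟨a, ha⟩ := hYA _ hyi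
          rw [ham_eq_max_iff hA hdc']
          exact Or.inr ⟨a, b, hbb, ha, hE a b (ha ▸ hyi) (hbb ▸ hxi)⟩
      rw [this]
    refine le_antisymm ?_ (le_csInf hSne fun s hs => (hall s hs).ge)
    obtain ⟨s, hs⟩ := hSne
    have := csInf_le hbdd hs
    rwa [hall s hs] at this
  · -- distance attains max → biclique
    intro hInf
    have key : ∀ x ∈ X, ∀ y ∈ Y, ham app x y = 3 * n + 1 := by
      intro x hx y hy
      set σ : {x // x ∈ X} ≃ {y // y ∈ Y} :=
        (Equiv.swap (⟨x, hx⟩ : {x // x ∈ X}) (σ0.symm ⟨y, hy⟩)).trans σ0 with hσ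
      have hmem : (∑ z ∈ X.attach, ((ham app z.1 (σ z).1 : ℕ) : ℝ)) ∈ S := ⟨σ, rfl⟩
      have h1 : M ≤ ∑ z ∈ X.attach, ((ham app z.1 (σ z).1 : ℕ) : ℝ) := by
        rw [← hInf]; exact csInf_le hbdd hmem
      have h2 := hub _ hmem
      have hsum : ∑ z ∈ X.attach, ((ham app z.1 (σ z).1 : ℕ) : ℝ)
          = ∑ _z ∈ X.attach, (((3 * n + 1 : ℕ) : ℝ)) := by
        rw [hconst]; linarith
      have hptwise := (Finset.sum_eq_sum_iff_of_le
        (fun i _ => by exact_mod_cast ham_le_max hA hdc' i.1 (σ i).1)).1 hsum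
      have hx' := hptwise ⟨x, hx⟩ (Finset.mem_attach _ _)
      have hσx : σ ⟨x, hx⟩ = ⟨y, hy⟩ := by
        rw [hσ]
        simp [Equiv.swap_apply_left]
      rw [hσx] at hx'
      exact_mod_cast hx'
    -- derive the biclique structure
    have hXne : X.Nonempty := Finset.card_pos.mp (by omega)
    have hYne : Y.Nonempty := Finset.card_pos.mp (by omega)
    obtain ⟨x0, hx0⟩ := hXne
    obtain ⟨y0, hy0⟩ := hYne
    rcases x0 with a0 | b0
    · -- X ⊆ A side
      have hYB : ∀ y ∈ Y, ∃ b : B, y = Sum.inr b := by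
        intro y hy
        have := (ham_eq_max_iff hA hdc' _ _).1 (key _ hx0 _ hy)
        rcases this with ⟨a, b, _, hd, _⟩ | ⟨a, b, hc, _, _⟩
        · exact ⟨b, hd⟩
        · simp at hc
      obtain ⟨b0, hy0'⟩ := hYB y0 hy0
      subst hy0'
      have hXA : ∀ x ∈ X, ∃ a : A, x = Sum.inl a := by
        intro x hx
        have := (ham_eq_max_iff hA hdc' _ _).1 (key _ hx _ hy0)
        rcases this with ⟨a, b, hc, _, _⟩ | ⟨a, b, _, hd, _⟩
        · exact ⟨a, hc⟩
        · simp at hd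
      refine Or.inl ⟨hXA, hYB, ?_⟩
      intro a b haX hbY
      have := (ham_eq_max_iff hA hdc' _ _).1 (key _ haX _ hbY)
      rcases this with ⟨a', b', hc, hd, hE⟩ | ⟨a', b', hc, _, _⟩
      · obtain rfl : a' = a := by injection hc.symm
        obtain rfl : b' = b := by injection hd.symm
        exact hE
      · simp at hc
    · -- X ⊆ B side
      have hYA : ∀ y ∈ Y, ∃ a : A, y = Sum.inl a := by
        intro y hy
        have := (ham_eq_max_iff hA hdc' _ _).1 (key _ hx0 _ hy)
        rcases this with ⟨a, b, hc, _, _⟩ | ⟨a, b, _, hd, _⟩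
        · simp at hc
        · exact ⟨a, hd⟩
      obtain ⟨a0, hy0'⟩ := hYA y0 hy0
      subst hy0'
      have hXB : ∀ x ∈ X, ∃ b : B, x = Sum.inr b := by
        intro x hx
        have := (ham_eq_max_iff hA hdc' _ _).1 (key _ hx _ hy0)
        rcases this with ⟨a, b, _, hd, _⟩ | ⟨a, b, hc, _, _⟩
        · simp at hd
        · exact ⟨b, hc⟩
      refine Or.inr ⟨hXB, hYA, ?_⟩
      intro a b haY hbX
      have := (ham_eq_max_iff hA hdc' _ _).1 (key _ hbX _ haY)
      rcases this with ⟨a', b', hc, _, _⟩ | ⟨a', b', hc, hd, hE⟩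
      · simp at hc
      · obtain rfl : b' = b := by injection hc.symm
        obtain rfl : a' = a := by injection hd.symm
        exact hE
end

section
/- Let T be a finite set and w : T × T → ℝ a weight function. Let x : T × T → ℕ be a b-matching consistent with degree functions (y^L, y^R), and let γ be a cycle in the complete bipartite graph with both parts equal to T, with associated alternating matchings M_LR^γ and M_RL^γ. Suppose x(e) ≥ 1 for every edge e ∈ M_LR^γ. Define x' : T × T → ℕ by x'(e) = x(e) − 1 for e ∈ M_LR^γ \ M_RL^γ, x'(e) = x(e) + 1 for e ∈ M_RL^γ \ M_LR^γ, and x'(e) = x(e) otherwise. Then x' is a b-matching consistent with (y^L, y^R), and its weight satisfies w(x') = w(x) − w(M_LR^γ) + w(M_RL^γ). -/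
/-!
Both matchings `M_LR^γ` and `M_RL^γ` have exactly one edge at every vertex of the cycle and none
elsewhere, so over `ℤ` the rerouted b-matching `x' = x - 𝟙_{M_LR} + 𝟙_{M_RL}` has the same row and
column sums as `x`, and its weight changes by `- w(M_LR) + w(M_RL)` by linearity.
-/

open scoped Classical

/-- A cycle in the complete bipartite graph with both parts equal to `T`:
an alternating sequence of `len ≥ 1` distinct left vertices and `len` distinct
right vertices. -/
structure BipCycle (T : Type*) where
  len : ℕ
  one_le_len : 1 ≤ len
  left : Fin len → T
  right : Fin len → T
  left_inj : Function.Injective left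
  right_inj : Function.Injective right

/-- The matching `M_LR^γ = {(c_i^L, c_i^R) : 1 ≤ i ≤ ℓ}` of a cycle `γ`. -/
noncomputable def BipCycle.MLR {T : Type*} (γ : BipCycle T) : Finset (T × T) :=
  Finset.image (fun i => (γ.left i, γ.right i)) Finset.univ

/-- The matching `M_RL^γ = {(c_{i+1 mod ℓ}^L, c_i^R) : 1 ≤ i ≤ ℓ}` of a cycle `γ`. -/
noncomputable def BipCycle.MRL {T : Type*} (γ : BipCycle T) : Finset (T × T) :=
  Finset.image (fun i => (γ.left (finRotate γ.len i), γ.right i)) Finset.univ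

open Finset

section Reroute

variable {E : Type*} [DecidableEq E] {M N : Finset E} {x x' : E → ℕ}

theorem cast_reroute {R : Type*} [AddGroupWithOne R] (hx : ∀ e ∈ M, 1 ≤ x e)
    (hx' : ∀ e, x' e = if e ∈ M \ N then x e - 1 else if e ∈ N \ M then x e + 1 else x e)
    (e : E) :
    (x' e : R) = x e - (if e ∈ M then 1 else 0) + (if e ∈ N then 1 else 0) := by
  rw [hx' e]
  by_cases hM : e ∈ M <;> by_cases hN : e ∈ N <;>
    simp [hM, hN, Nat.cast_sub (hx e _)]

theorem sum_comp_reroute {D : Type*} [Fintype D] (hx : ∀ e ∈ M, 1 ≤ x e)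
    (hx' : ∀ e, x' e = if e ∈ M \ N then x e - 1 else if e ∈ N \ M then x e + 1 else x e)
    (h : D → E) (hcard : #{d | h d ∈ M} = #{d | h d ∈ N}) :
    ∑ d, x' (h d) = ∑ d, x (h d) := by
  have hℤ : ∑ d, (x' (h d) : ℤ) = ∑ d, (x (h d) : ℤ) := by
    simp only [cast_reroute hx hx', sum_add_distrib, sum_sub_distrib, sum_boole, hcard]
    ring
  exact_mod_cast hℤ

theorem sum_mul_reroute {R : Type*} [Ring R] [Fintype E] (hx : ∀ e ∈ M, 1 ≤ x e)
    (hx' : ∀ e, x' e = if e ∈ M \ N then x e - 1 else if e ∈ N \ M then x e + 1 else x e)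
    (w : E → R) :
    ∑ e, (x' e : R) * w e = ∑ e, (x e : R) * w e - ∑ e ∈ M, w e + ∑ e ∈ N, w e := by
  simp only [cast_reroute hx hx', add_mul, sub_mul, ite_mul, one_mul, zero_mul, sum_add_distrib,
    sum_sub_distrib, sum_ite_mem, univ_inter]

end Reroute

section ImageDegree

variable {ι α β : Type*} [Fintype ι] {f : ι → α × β}

theorem card_filter_mk_mem_image_univ [Fintype β] (hf : Function.Injective f) (a : α) :
    #{b | (a, b) ∈ univ.image f} = #{i | (f i).1 = a} := by
  rw [← card_image_of_injective _ hf, ← card_map ⟨Prod.mk a, Prod.mk_right_injective a⟩]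
  congr 1
  ext ⟨a', b⟩
  simp only [mem_map, mem_filter, mem_univ, mem_image, true_and, Function.Embedding.coeFn_mk,
    Prod.mk.injEq]
  grind

theorem card_filter_mk_left_mem_image_univ [Fintype α] (hf : Function.Injective f) (b : β) :
    #{a | (a, b) ∈ univ.image f} = #{i | (f i).2 = b} := by
  rw [← card_image_of_injective _ hf, ← card_map ⟨(·, b), Prod.mk_left_injective b⟩]
  congr 1
  ext ⟨a, b'⟩
  simp only [mem_map, mem_filter, mem_univ, mem_image, true_and, Function.Embedding.coeFn_mk,
    Prod.mk.injEq]
  grind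

end ImageDegree

namespace BipCycle

variable {T : Type*} [Fintype T] (γ : BipCycle T)

theorem card_row_MLR_eq_MRL (t : T) : #{r | (t, r) ∈ γ.MLR} = #{r | (t, r) ∈ γ.MRL} := by
  rw [MLR, MRL, card_filter_mk_mem_image_univ fun _ _ h => γ.right_inj (congrArg Prod.snd h),
    card_filter_mk_mem_image_univ fun _ _ h => γ.right_inj (congrArg Prod.snd h)]
  exact (card_equiv (finRotate γ.len) (by simp)).symm

theorem card_col_MLR_eq_MRL (t : T) : #{r | (r, t) ∈ γ.MLR} = #{r | (r, t) ∈ γ.MRL} := by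
  rw [MLR, MRL, card_filter_mk_left_mem_image_univ fun _ _ h => γ.right_inj (congrArg Prod.snd h),
    card_filter_mk_left_mem_image_univ fun _ _ h => γ.right_inj (congrArg Prod.snd h)]

end BipCycle

/-- Rerouting a b-matching along a cycle: if `x` is a b-matching consistent with degree
functions `(yL, yR)` that uses every edge of `M_LR^γ`, then replacing `M_LR^γ` by
`M_RL^γ` yields a b-matching `x'` that is still consistent with `(yL, yR)` and whose
weight is `w(x) - w(M_LR^γ) + w(M_RL^γ)`. -/
theorem reroute_bMatching {T : Type*} [Fintype T] (w : T × T → ℝ)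
    (yL yR : T → ℕ) (x : T × T → ℕ)
    (hL : ∀ t : T, ∑ r : T, x (t, r) = yL t)
    (hR : ∀ t : T, ∑ r : T, x (r, t) = yR t)
    (γ : BipCycle T)
    (hx : ∀ e ∈ γ.MLR, 1 ≤ x e)
    (x' : T × T → ℕ)
    (hx' : ∀ e : T × T,
      x' e = if e ∈ γ.MLR \ γ.MRL then x e - 1
             else if e ∈ γ.MRL \ γ.MLR then x e + 1
             else x e) :
    (∀ t : T, ∑ r : T, x' (t, r) = yL t) ∧
    (∀ t : T, ∑ r : T, x' (r, t) = yR t) ∧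
    ∑ e : T × T, (x' e : ℝ) * w e
      = ∑ e : T × T, (x e : ℝ) * w e - ∑ e ∈ γ.MLR, w e + ∑ e ∈ γ.MRL, w e :=
  ⟨fun t => (sum_comp_reroute hx hx' _ (γ.card_row_MLR_eq_MRL t)).trans (hL t),
    fun t => (sum_comp_reroute hx hx' (·, t) (γ.card_col_MLR_eq_MRL t)).trans (hR t),
    sum_mul_reroute hx hx' w⟩
end

section
/- Let T be a finite set and w : T × T → ℝ a weight function. Let y^L, y^R : T → ℕ be degree functions and let B be a b-matching consistent with (y^L, y^R); write M_B = {e ∈ T × T : B(e) ≥ 1} for the support of B. Then the following two statements are equivalent: (1) B has minimum weight among all b-matchings consistent with (y^L, y^R); (2) for every cycle γ in the complete bipartite graph with parts (T,T) whose two alternating matchings have different weights, w(M_LR^γ) ≠ w(M_RL^γ), the heavier of the two matchings M_LR^γ and M_RL^γ is not contained in M_B. -/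
open scoped Classical

/-!
Exchanging a b-matching along an alternating cycle, i.e. adding one of its two matchings and
removing the other, preserves all degrees and changes the weight by the difference of the
weights of the two matchings. Hence a minimum-weight `B` cannot contain the heavier matching of
a cycle. Conversely, if `C ≠ B` has the same degrees, alternately following edges with `C < B`
and edges with `B < C` closes up into a cycle whose `M_LR` lies in the support of `B`, so it is
not the heavier matching. Exchanging `C` along that cycle does not increase its weight and
brings it strictly closer to `B` in ℓ¹-distance; induction on this distance gives
`w(B) ≤ w(C)`.
-/

open Finset Function

theorem Function.exists_mem_periodicPts {α : Type*} [Finite α] [Nonempty α] (f : α → α) :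
    ∃ x, x ∈ periodicPts f := by
  obtain ⟨m, n, heq, hne⟩ : ∃ m n, f^[m] (Classical.arbitrary α) = f^[n] (Classical.arbitrary α)
      ∧ m ≠ n := by
    simpa [Injective] using not_injective_infinite_finite (f^[·] (Classical.arbitrary α))
  wlog hlt : m < n generalizing m n
  · exact this n m heq.symm hne.symm (by omega)
  refine ⟨f^[m] (Classical.arbitrary α), mk_mem_periodicPts (n := n - m) (by omega) ?_⟩
  rw [IsPeriodicPt, IsFixedPt, ← iterate_add_apply, Nat.sub_add_cancel hlt.le, heq]

theorem Function.iterate_finRotate_minimalPeriod {α : Type*} (f : α → α) (x : α)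
    (i : Fin (minimalPeriod f x)) : f^[finRotate _ i] x = f (f^[i] x) := by
  have := i.neZero
  rw [finRotate_apply, Fin.val_add, Fin.val_one', Nat.add_mod_mod, iterate_mod_minimalPeriod_eq,
    iterate_succ_apply']

theorem exists_bipCycle_of_forall_exists {T : Type*} [Finite T] (P N : T → T → Prop)
    (hP : ∀ t r, P t r → ∃ t', N t' r) (hN : ∀ t r, N t r → ∃ r', P t r')
    (hne : ∃ t r, P t r) :
    ∃ γ : BipCycle T, (∀ i, P (γ.left i) (γ.right i)) ∧
      ∀ i, N (γ.left (finRotate γ.len i)) (γ.right i) := by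
  let L := {t // ∃ r, P t r}
  let R := {r // ∃ t, P t r}
  choose ρ hρ using fun t : L => t.2
  choose ψ hψ using fun r : R => hP _ _ r.2.choose_spec
  -- `φ t` depends on `t` only through `ρ t`, so distinct left vertices on an orbit of `φ`
  -- force distinct right vertices.
  let φ : L → L := fun t => ⟨ψ ⟨ρ t, t, hρ t⟩, hN _ _ (hψ _)⟩
  have : Nonempty L := let ⟨t, r, h⟩ := hne; ⟨⟨t, r, h⟩⟩
  obtain ⟨x, hx⟩ := exists_mem_periodicPts φ
  have orbit_inj : Injective fun i : Fin (minimalPeriod φ x) => φ^[i] x := fun i j h =>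
    Fin.ext (iterate_injOn_Iio_minimalPeriod i.2 j.2 h)
  refine ⟨⟨minimalPeriod φ x, minimalPeriod_pos_of_mem_periodicPts hx, fun i => (φ^[i] x).1,
    fun i => ρ (φ^[i] x), Subtype.val_injective.comp orbit_inj, fun i j h => ?_⟩,
    fun i => hρ _, fun i => ?_⟩
  · have : φ (φ^[i] x) = φ (φ^[j] x) := by simp only [φ, h]
    rw [← iterate_finRotate_minimalPeriod φ x i, ← iterate_finRotate_minimalPeriod φ x j] at this
    exact (finRotate _).injective (orbit_inj this)
  · simp only [iterate_finRotate_minimalPeriod]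
    exact hψ _

namespace BipCycle

variable {T : Type*} (γ : BipCycle T)

theorem sum_MLR {M : Type*} [AddCommMonoid M] (f : T × T → M) :
    ∑ e ∈ γ.MLR, f e = ∑ i, f (γ.left i, γ.right i) :=
  sum_image fun _ _ _ _ h => γ.right_inj (congrArg Prod.snd h)

theorem sum_MRL {M : Type*} [AddCommMonoid M] (f : T × T → M) :
    ∑ e ∈ γ.MRL, f e = ∑ i, f (γ.left (finRotate γ.len i), γ.right i) :=
  sum_image fun _ _ _ _ h => γ.right_inj (congrArg Prod.snd h)

theorem sum_MLR_fst_eq_sum_MRL_fst {M : Type*} [AddCommMonoid M] (g : T → M) :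
    ∑ e ∈ γ.MLR, g e.1 = ∑ e ∈ γ.MRL, g e.1 := by
  rw [sum_MLR, sum_MRL]
  exact (Equiv.sum_comp (finRotate γ.len) (g ∘ γ.left)).symm

theorem sum_MLR_snd_eq_sum_MRL_snd {M : Type*} [AddCommMonoid M] (g : T → M) :
    ∑ e ∈ γ.MLR, g e.2 = ∑ e ∈ γ.MRL, g e.2 := by
  rw [sum_MLR, sum_MRL]

theorem forall_mem_MLR {p : T × T → Prop} :
    (∀ e ∈ γ.MLR, p e) ↔ ∀ i, p (γ.left i, γ.right i) := by
  simp [MLR]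

theorem forall_mem_MRL {p : T × T → Prop} :
    (∀ e ∈ γ.MRL, p e) ↔ ∀ i, p (γ.left (finRotate γ.len i), γ.right i) := by
  simp [MRL]

theorem MLR_nonempty : γ.MLR.Nonempty :=
  have : Nonempty (Fin γ.len) := ⟨⟨0, γ.one_le_len⟩⟩
  univ_nonempty.image _

end BipCycle

section

variable {T : Type*} {B C : T × T → ℕ} {M₁ M₂ : Finset (T × T)}

/-- The truncated subtraction is exact when `C` is positive on `M₂`. -/
noncomputable def exchange (C : T × T → ℕ) (M₁ M₂ : Finset (T × T)) (e : T × T) : ℕ :=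
  C e + (if e ∈ M₁ then 1 else 0) - (if e ∈ M₂ then 1 else 0)

theorem exchange_add_ite (hC : ∀ e ∈ M₂, 1 ≤ C e) (e : T × T) :
    exchange C M₁ M₂ e + (if e ∈ M₂ then 1 else 0) = C e + (if e ∈ M₁ then 1 else 0) := by
  unfold exchange
  by_cases he : e ∈ M₂
  · have := hC e he
    split_ifs <;> omega
  · split_ifs <;> omega

variable [Fintype T]

def SameMargins (X Y : T × T → ℕ) : Prop :=
  (∀ t, ∑ r, X (t, r) = ∑ r, Y (t, r)) ∧ ∀ t, ∑ r, X (r, t) = ∑ r, Y (r, t)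

theorem SameMargins.trans {X Y Z : T × T → ℕ} (hXY : SameMargins X Y)
    (hYZ : SameMargins Y Z) : SameMargins X Z :=
  ⟨fun t => (hXY.1 t).trans (hYZ.1 t), fun t => (hXY.2 t).trans (hYZ.2 t)⟩

theorem sum_exchange_mul_add {R : Type*} [Semiring R] (hC : ∀ e ∈ M₂, 1 ≤ C e)
    (c : T × T → R) :
    ∑ e, (exchange C M₁ M₂ e : R) * c e + ∑ e ∈ M₂, c e = ∑ e, (C e : R) * c e + ∑ e ∈ M₁, c e := by
  have sum_mem (M : Finset (T × T)) :
      ∑ e ∈ M, c e = ∑ e, ((if e ∈ M then 1 else 0 : ℕ) : R) * c e := by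
    simp [ite_mul, sum_ite_mem]
  simp only [sum_mem, ← sum_add_distrib, ← add_mul, ← Nat.cast_add, exchange_add_ite hC]

theorem sum_exchange_row (hC : ∀ e ∈ M₂, 1 ≤ C e)
    (hfst : ∀ g : T → ℕ, ∑ e ∈ M₁, g e.1 = ∑ e ∈ M₂, g e.1) (t : T) :
    ∑ r, exchange C M₁ M₂ (t, r) = ∑ r, C (t, r) := by
  have h := sum_exchange_mul_add (M₁ := M₁) hC fun e => if e.1 = t then 1 else 0
  rw [hfst fun s => if s = t then 1 else 0] at h
  simpa [Fintype.sum_prod_type_right, mul_ite] using add_right_cancel h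

theorem sum_exchange_col (hC : ∀ e ∈ M₂, 1 ≤ C e)
    (hsnd : ∀ g : T → ℕ, ∑ e ∈ M₁, g e.2 = ∑ e ∈ M₂, g e.2) (t : T) :
    ∑ r, exchange C M₁ M₂ (r, t) = ∑ r, C (r, t) := by
  have h := sum_exchange_mul_add (M₁ := M₁) hC fun e => if e.2 = t then 1 else 0
  rw [hsnd fun s => if s = t then 1 else 0] at h
  simpa [Fintype.sum_prod_type, mul_ite] using add_right_cancel h

theorem sameMargins_exchange (hC : ∀ e ∈ M₂, 1 ≤ C e)
    (hfst : ∀ g : T → ℕ, ∑ e ∈ M₁, g e.1 = ∑ e ∈ M₂, g e.1)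
    (hsnd : ∀ g : T → ℕ, ∑ e ∈ M₁, g e.2 = ∑ e ∈ M₂, g e.2) :
    SameMargins (exchange C M₁ M₂) C :=
  ⟨sum_exchange_row hC hfst, sum_exchange_col hC hsnd⟩

theorem sum_dist_exchange_lt (hpos : ∀ e ∈ M₁, C e < B e) (hneg : ∀ e ∈ M₂, B e < C e)
    (hM₁ : M₁.Nonempty) :
    ∑ e, Nat.dist (B e) (exchange C M₁ M₂ e) < ∑ e, Nat.dist (B e) (C e) := by
  have key (e : T × T) :
      Nat.dist (B e) (exchange C M₁ M₂ e) + (if e ∈ M₁ then 1 else 0) ≤ Nat.dist (B e) (C e) := by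
    have := hpos e
    have := hneg e
    unfold exchange Nat.dist
    split_ifs <;> grind
  obtain ⟨e₀, he₀⟩ := hM₁
  refine sum_lt_sum (fun e _ => ?_) ⟨e₀, mem_univ _, ?_⟩
  · exact (Nat.le_add_right _ _).trans (key e)
  · simpa [he₀] using key e₀

theorem exists_lt_of_sum_eq_of_lt {f g : T → ℕ} (h : ∑ t, f t = ∑ t, g t) {t₀ : T}
    (hlt : f t₀ < g t₀) : ∃ t, g t < f t := by
  by_contra! hle
  exact (sum_lt_sum (fun t _ => hle t) ⟨t₀, mem_univ _, hlt⟩).ne h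

theorem exists_bipCycle_of_sameMargins (hCB : SameMargins C B) (hne : C ≠ B) :
    ∃ γ : BipCycle T, (∀ e ∈ γ.MLR, C e < B e) ∧ ∀ e ∈ γ.MRL, B e < C e := by
  simp only [BipCycle.forall_mem_MLR, BipCycle.forall_mem_MRL]
  have hN (t r : T) (h : B (t, r) < C (t, r)) : ∃ r', C (t, r') < B (t, r') :=
    exists_lt_of_sum_eq_of_lt (hCB.1 t).symm h
  refine exists_bipCycle_of_forall_exists (fun t r => C (t, r) < B (t, r))
    (fun t r => B (t, r) < C (t, r)) (fun t r h => exists_lt_of_sum_eq_of_lt (hCB.2 r) h)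
    hN ?_
  obtain ⟨⟨t, r⟩, h⟩ := Function.ne_iff.1 hne
  rcases h.lt_or_gt with h | h
  · exact ⟨t, r, h⟩
  · exact ⟨t, hN t r h⟩

theorem sum_le_sum_of_minimal (w : T × T → ℝ)
    (hmin : ∀ C, SameMargins C B → ∑ e, (B e : ℝ) * w e ≤ ∑ e, (C e : ℝ) * w e)
    (hfst : ∀ g : T → ℕ, ∑ e ∈ M₁, g e.1 = ∑ e ∈ M₂, g e.1)
    (hsnd : ∀ g : T → ℕ, ∑ e ∈ M₁, g e.2 = ∑ e ∈ M₂, g e.2) (hB : ∀ e ∈ M₂, 1 ≤ B e) :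
    ∑ e ∈ M₂, w e ≤ ∑ e ∈ M₁, w e := by
  have := hmin _ (sameMargins_exchange hB hfst hsnd)
  have := sum_exchange_mul_add (M₁ := M₁) hB w
  linarith

theorem sum_mul_le_of_forall_bipCycle_le (w : T × T → ℝ)
    (hcyc : ∀ γ : BipCycle T, (∀ e ∈ γ.MLR, 1 ≤ B e) → ∑ e ∈ γ.MLR, w e ≤ ∑ e ∈ γ.MRL, w e)
    (C : T × T → ℕ) (hC : SameMargins C B) :
    ∑ e, (B e : ℝ) * w e ≤ ∑ e, (C e : ℝ) * w e := by
  by_cases hCB : C = B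
  · rw [hCB]
  obtain ⟨γ, hpos, hneg⟩ := exists_bipCycle_of_sameMargins hC hCB
  have hC₁ : ∀ e ∈ γ.MRL, 1 ≤ C e := fun e he => Nat.one_le_of_lt (hneg e he)
  have := hcyc γ fun e he => Nat.one_le_of_lt (hpos e he)
  have := sum_exchange_mul_add (M₁ := γ.MLR) hC₁ w
  have := sum_mul_le_of_forall_bipCycle_le w hcyc (exchange C γ.MLR γ.MRL)
    ((sameMargins_exchange hC₁ γ.sum_MLR_fst_eq_sum_MRL_fst γ.sum_MLR_snd_eq_sum_MRL_snd).trans hC)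
  linarith
termination_by ∑ e, Nat.dist (B e) (C e)
decreasing_by exact sum_dist_exchange_lt hpos hneg γ.MLR_nonempty

end

/-- A b-matching `B` consistent with degree functions `(yL, yR)` has minimum weight
among all b-matchings consistent with `(yL, yR)` iff for every cycle `γ` whose two
alternating matchings have different weights, the heavier of the two matchings is
not contained in the support `M_B = {e : B e ≥ 1}`. -/
theorem min_bMatching_iff_no_heavy_cycle {T : Type*} [Fintype T] (w : T × T → ℝ)
    (yL yR : T → ℕ) (B : T × T → ℕ)
    (hBL : ∀ t : T, ∑ r : T, B (t, r) = yL t)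
    (hBR : ∀ t : T, ∑ r : T, B (r, t) = yR t) :
    ((∀ B' : T × T → ℕ,
        (∀ t : T, ∑ r : T, B' (t, r) = yL t) →
        (∀ t : T, ∑ r : T, B' (r, t) = yR t) →
        ∑ e : T × T, (B e : ℝ) * w e ≤ ∑ e : T × T, (B' e : ℝ) * w e)
      ↔
      (∀ γ : BipCycle T, (∑ e ∈ γ.MLR, w e) ≠ (∑ e ∈ γ.MRL, w e) →
        ¬ (∀ e ∈ (if (∑ e ∈ γ.MRL, w e) < (∑ e ∈ γ.MLR, w e) then γ.MLR else γ.MRL),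
            1 ≤ B e))) := by
  constructor
  · intro hmin γ hne hheavy
    have hmin' (C : T × T → ℕ) (hC : SameMargins C B) :=
      hmin C (fun t => (hC.1 t).trans (hBL t)) fun t => (hC.2 t).trans (hBR t)
    have hfst := γ.sum_MLR_fst_eq_sum_MRL_fst (M := ℕ)
    have hsnd := γ.sum_MLR_snd_eq_sum_MRL_snd (M := ℕ)
    split_ifs at hheavy with hlt
    · exact hlt.not_ge (sum_le_sum_of_minimal w hmin'
        (fun g => (hfst g).symm) (fun g => (hsnd g).symm) hheavy)
    · exact hne (le_antisymm (not_lt.1 hlt)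
        (sum_le_sum_of_minimal w hmin' hfst hsnd hheavy))
  · intro hcyc B' hL hR
    refine sum_mul_le_of_forall_bipCycle_le w (fun γ hγ => ?_) B'
      ⟨fun t => (hL t).trans (hBL t).symm, fun t => (hR t).trans (hBR t).symm⟩
    by_contra! hlt
    exact hcyc γ hlt.ne' (by rwa [if_pos hlt])
end
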